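/- arXiv:1610.02952 — 2 statements merged into one kernel-verified Lean document; each statement's English description precedes it below -/
import Mathlib

section
/- Let m be a closed and coherent integer DBM of dimension 2n, and define the DBM m' by m'[i,j] = min( m[i,j], ⌊m[i,ī]/2⌋ + ⌊m[j̄,j]/2⌋ ) for all i,j. Then m' is either closed or it is not consistent. -/
/-!
Write `u i = ⌊m[i,ī]/2⌋` and `v j = ⌊m[j̄,j]/2⌋`, so that `m' = min m (u i + v j)`.
Closedness and coherence give `m[i,ī] ≤ 2·m[i,k] + m[k,k̄]`, hence `u i ≤ m[i,k] + u k`, and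
dually `v j ≤ v k + m[k,j]`. With these bounds the minimum of a closed matrix and the potential
matrix `u i + v j` satisfies the triangle inequality as soon as `u k + v k ≥ 0` for every `k`,
and then its diagonal is still zero. Otherwise `m'[k,k] ≤ u k + v k < 0` for some `k`.
-/

namespace Octagon

/-- An integer DBM of dimension `2*n` with entries in `ℤ ∪ {+∞}`. -/
abbrev DBM (n : ℕ) : Type := Fin (2 * n) → Fin (2 * n) → WithTop ℤ

/-- `bar i = i + 1` if `i` is even, `i - 1` if `i` is odd. -/
def bar {n : ℕ} (i : Fin (2 * n)) : Fin (2 * n) :=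
  if h : (i : ℕ) % 2 = 0 then ⟨(i : ℕ) + 1, by have := i.isLt; omega⟩
  else ⟨(i : ℕ) - 1, by have := i.isLt; omega⟩

/-- A DBM is closed iff its diagonal is zero and it satisfies the triangle inequality. -/
def Closed {n : ℕ} (m : DBM n) : Prop :=
  (∀ i, m i i = 0) ∧ ∀ i j k, m i j ≤ m i k + m k j

/-- A DBM is consistent iff its diagonal entries are nonnegative. -/
def Consistent {n : ℕ} (m : DBM n) : Prop :=
  ∀ i, 0 ≤ m i i

/-- A DBM is coherent iff `m[i,j] = m[bar j, bar i]` for all `i, j`. -/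
def Coherent {n : ℕ} (m : DBM n) : Prop :=
  ∀ i j, m i j = m (bar j) (bar i)

/-- Incremental closure of `m` with the new constraint `x'_a - x'_b ≤ d`. -/
def IncClose {n : ℕ} (m : DBM n) (a b : Fin (2 * n)) (d : ℤ) : DBM n :=
  fun i j =>
    min (m i j) <|
    min (m i a + (d : WithTop ℤ) + m b j) <|
    min (m i (bar b) + (d : WithTop ℤ) + m (bar a) j) <|
    min (m i (bar b) + (d : WithTop ℤ) + m (bar a) a + (d : WithTop ℤ) + m b j)
        (m i a + (d : WithTop ℤ) + m b (bar b) + (d : WithTop ℤ) + m (bar a) j)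

/-- Floor halving `⌊x/2⌋` on `ℤ ∪ {+∞}`, mapping `+∞` to `+∞`. -/
def fhalve : WithTop ℤ → WithTop ℤ := WithTop.map (fun x => Int.fdiv x 2)

/-- The entrywise tightening operation `x ↦ 2·⌊x/2⌋`, mapping `+∞` to `+∞`. -/
def tightEntry : WithTop ℤ → WithTop ℤ := WithTop.map (fun x => 2 * Int.fdiv x 2)

/-- Tightening of an integer DBM: key entries `m[i, bar i]` are replaced by
`2·⌊m[i, bar i]/2⌋`, all other entries are unchanged. -/
def Tighten {n : ℕ} (m : DBM n) : DBM n :=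
  fun i j => if j = bar i then tightEntry (m i j) else m i j

/-- Integer strengthening of a DBM. -/
def Strengthen {n : ℕ} (m : DBM n) : DBM n :=
  fun i j => min (m i j) (fhalve (m i (bar i)) + fhalve (m (bar j) j))

/-- An extended integer is even iff it is `+∞` or a finite even integer. -/
def EvenTop (x : WithTop ℤ) : Prop :=
  x = ⊤ ∨ ∃ k : ℤ, x = ((2 * k : ℤ) : WithTop ℤ)

lemma bar_bar {n : ℕ} (i : Fin (2 * n)) : bar (bar i) = i := by
  have := i.isLt
  ext
  unfold bar
  split_ifs with h₁ h₂ h₂ <;> simp only at h₁ h₂ ⊢ <;> omega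

lemma fhalve_le_add {x y z : WithTop ℤ} (h : x ≤ y + y + z) : fhalve x ≤ y + fhalve z := by
  induction y with
  | top => simp
  | coe a =>
  induction z with
  | top => simp [fhalve]
  | coe c =>
  induction x with
  | top => simp [← WithTop.coe_add] at h
  | coe b =>
  simp only [fhalve, WithTop.map_coe, ← WithTop.coe_add, WithTop.coe_le_coe] at h ⊢
  rw [Int.fdiv_eq_ediv_of_nonneg _ zero_le_two, Int.fdiv_eq_ediv_of_nonneg _ zero_le_two]
  omega

section Potential

variable {ι α : Type*} [AddCommMonoid α] [LinearOrder α] [IsOrderedAddMonoid α]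
  {m : ι → ι → α} {u v : ι → α}

lemma min_add_potential_triangle (htri : ∀ i j k, m i j ≤ m i k + m k j)
    (hu : ∀ i k, u i ≤ m i k + u k) (hv : ∀ j k, v j ≤ v k + m k j)
    (huv : ∀ k, 0 ≤ u k + v k) (i j k : ι) :
    min (m i j) (u i + v j) ≤ min (m i k) (u i + v k) + min (m k j) (u k + v j) := by
  rcases min_choice (m i k) (u i + v k) with hik | hik <;>
    rcases min_choice (m k j) (u k + v j) with hkj | hkj <;> rw [hik, hkj]
  · exact (min_le_left _ _).trans (htri i j k)
  · calc min (m i j) (u i + v j) ≤ u i + v j := min_le_right _ _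
      _ ≤ m i k + u k + v j := by grw [hu i k]
      _ = m i k + (u k + v j) := add_assoc _ _ _
  · calc min (m i j) (u i + v j) ≤ u i + v j := min_le_right _ _
      _ ≤ u i + (v k + m k j) := by grw [hv j k]
      _ = u i + v k + m k j := (add_assoc _ _ _).symm
  · calc min (m i j) (u i + v j) ≤ u i + v j := min_le_right _ _
      _ ≤ u i + v j + (u k + v k) := le_add_of_nonneg_right (huv k)
      _ = u i + v k + (u k + v j) := by abel

end Potential

lemma Closed.min_add_potential {n : ℕ} {m : DBM n} (hm : Closed m)
    {u v : Fin (2 * n) → WithTop ℤ} (hu : ∀ i k, u i ≤ m i k + u k)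
    (hv : ∀ j k, v j ≤ v k + m k j) (huv : ∀ k, 0 ≤ u k + v k) :
    Closed fun i j => min (m i j) (u i + v j) :=
  ⟨fun i => by simp only [hm.1 i, min_eq_left (huv i)],
    min_add_potential_triangle hm.2 hu hv huv⟩

section Halving

variable {n : ℕ} {m : DBM n}

lemma fhalve_le_add_fhalve (hm : Closed m) (hcoh : Coherent m) (i k : Fin (2 * n)) :
    fhalve (m i (bar i)) ≤ m i k + fhalve (m k (bar k)) := by
  apply fhalve_le_add
  calc m i (bar i) ≤ m i k + m k (bar i) := hm.2 _ _ _
    _ ≤ m i k + (m k (bar k) + m (bar k) (bar i)) := by grw [hm.2 k (bar i) (bar k)]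
    _ = m i k + m i k + m k (bar k) := by rw [← hcoh i k]; abel

lemma fhalve_le_fhalve_add (hm : Closed m) (hcoh : Coherent m) (j k : Fin (2 * n)) :
    fhalve (m (bar j) j) ≤ fhalve (m (bar k) k) + m k j := by
  have h := fhalve_le_add_fhalve hm hcoh (bar j) (bar k)
  rwa [bar_bar, hcoh (bar j) (bar k), bar_bar, bar_bar, add_comm] at h

end Halving

/-- Lemma: tightening-and-strengthening a closed coherent integer DBM in one
step yields a DBM that is closed or inconsistent. -/
theorem tighten_strengthen_closed_or_not_consistent {n : ℕ} (m : DBM n)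
    (hcl : Closed m) (hcoh : Coherent m) (m' : DBM n)
    (hm' : ∀ i j, m' i j = min (m i j) (fhalve (m i (bar i)) + fhalve (m (bar j) j))) :
    Closed m' ∨ ¬ Consistent m' := by
  rw [or_iff_not_imp_right, not_not]
  intro hcons
  have huv : ∀ k, 0 ≤ fhalve (m k (bar k)) + fhalve (m (bar k) k) := fun k =>
    (hcons k).trans ((hm' k k).trans_le (min_le_right _ _))
  rw [show m' = _ from funext₂ hm']
  exact hcl.min_add_potential (fhalve_le_add_fhalve hcl hcoh)
    (fhalve_le_fhalve_add hcl hcoh) huv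

end Octagon
end

section
/- Let m be a closed and coherent integer DBM of dimension 2n, let a,b ∈ {0,…,2n−1}, let d ∈ ℤ, and write Q(i,j) = min( m[i,j], m[i,a]+d+m[b,j], m[i,b̄]+d+m[ā,j], m[i,b̄]+d+m[ā,a]+d+m[b,j], m[i,a]+d+m[b,b̄]+d+m[ā,j] ). Define the DBM m' by m'[i,ī] = 2·⌊Q(i,ī)/2⌋ for all i, and m'[i,j] = min( Q(i,j), ⌊(m'[i,ī] + m'[j̄,j])/2⌋ ) for all i,j with j ≠ ī (here m'[i,ī] and m'[j̄,j] are even, so this floor halving is exact). Let m† = IncClose(m,a,b,d), m‡ = Tighten(m†) and m* = Strengthen(m‡), where Strengthen(x)[i,j] = min( x[i,j], ⌊x[i,ī]/2⌋ + ⌊x[j̄,j]/2⌋ ). Then m' = m*; that is, the one-pass incremental tight closure equals incremental closure followed by tightening and strengthening. -/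
namespace Octagon

lemma fhalve_tight_add (x y : WithTop ℤ) :
    fhalve (tightEntry x + tightEntry y) = fhalve (tightEntry x) + fhalve (tightEntry y) := by
  induction x using WithTop.recTopCoe with
  | top => simp [fhalve, tightEntry]
  | coe p =>
    induction y using WithTop.recTopCoe with
    | top => simp [fhalve, tightEntry]
    | coe q =>
      simp only [tightEntry, fhalve, WithTop.map_coe, ← WithTop.coe_add, ← mul_add,
        Int.mul_fdiv_cancel_left _ (two_ne_zero)]

lemma fhalve_tight_self (x : WithTop ℤ) :
    fhalve (tightEntry x) + fhalve (tightEntry x) = tightEntry x := by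
  induction x using WithTop.recTopCoe with
  | top => simp [fhalve, tightEntry]
  | coe p =>
    simp only [tightEntry, fhalve, WithTop.map_coe, ← WithTop.coe_add,
      Int.mul_fdiv_cancel_left _ (two_ne_zero)]
    norm_cast
    ring

/-- Theorem (Correctness of incremental tight closure): the one-pass
incremental tight closure equals incremental closure followed by tightening
and strengthening. -/
theorem incTightClose_eq {n : ℕ} (m : DBM n) (hcl : Closed m) (hcoh : Coherent m)
    (a b : Fin (2 * n)) (d : ℤ) (m' : DBM n)
    (hkey : ∀ i, m' i (bar i) = tightEntry (IncClose m a b d i (bar i)))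
    (hrest : ∀ i j, j ≠ bar i →
      m' i j = min (IncClose m a b d i j) (fhalve (m' i (bar i) + m' (bar j) j))) :
    m' = Strengthen (Tighten (IncClose m a b d)) := by
  funext i j
  by_cases hj : j = bar i
  · subst hj
    rw [hkey]
    simp only [Strengthen, Tighten, bar_bar, eq_self_iff_true, if_true]
    rw [fhalve_tight_self, min_self]
  · rw [hrest i j hj, hkey i]
    have h2 := hkey (bar j)
    rw [bar_bar] at h2
    rw [h2]
    simp only [Strengthen, Tighten, if_neg hj, bar_bar, eq_self_iff_true, if_true]
    rw [fhalve_tight_add]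

end Octagon
end
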